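/- arXiv:2204.04974 — 4 statements merged into one kernel-verified Lean document; each statement's English description precedes it below -/
import Mathlib

section
/- For a square matrix A of index 1, the Drazin inverse is given by the limit A_D^{-1} = lim_{z→0⁻} (A² - zI)^{-1} A, equivalently lim_{a→∞} a(I + aA²)^{-1} A. -/
/-!
With `P = A X`, the matrix `A² - z` acts as `A² (1 - z X²)` on the range of the idempotent `P`
and as `-z` on its kernel, so for small `z ≠ 0` it is inverted by `(1 - z X²)⁻¹ X² - z⁻¹ (1 - P)`,
which gives `(A² - z)⁻¹ A = (1 - z X²)⁻¹ X`. The right-hand side is continuous at `z = 0`, with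
value `X`. The limit at infinity is the one at `0⁻` along `z = -a⁻¹`.
-/

open Filter Topology

/-- `x` is the group inverse of `a`, i.e. its Drazin inverse when `a` has index at most one. -/
structure IsGroupInverse {M : Type*} [Monoid M] (a x : M) : Prop where
  inv_mul_inv : x * a * x = x
  commute : Commute a x
  sq_mul_inv : a ^ 2 * x = a

namespace IsGroupInverse

section Monoid

variable {M : Type*} [Monoid M] {a x : M}

theorem mul_inv_mul (h : IsGroupInverse a x) : a * x * a = a := by
  rw [mul_assoc, ← h.commute.eq, ← mul_assoc, ← sq, h.sq_mul_inv]

theorem inv_sq_mul (h : IsGroupInverse a x) : x ^ 2 * a = x := by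
  rw [sq, mul_assoc, ← h.commute.eq, ← mul_assoc, h.inv_mul_inv]

theorem inv_sq_mul_sq (h : IsGroupInverse a x) : x ^ 2 * a ^ 2 = a * x := by
  rw [sq a, ← mul_assoc, h.inv_sq_mul, h.commute.eq]

theorem inv_sq_mul_mul_inv (h : IsGroupInverse a x) : x ^ 2 * (a * x) = x ^ 2 := by
  rw [← mul_assoc, h.inv_sq_mul, sq]

end Monoid

section Algebra

variable {K R : Type*} [Field K] [Ring R] [Algebra K R] {a x u : R} {z : K}

theorem one_sub_mul_inv_mul (h : IsGroupInverse a x) : (1 - a * x) * a = 0 := by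
  rw [sub_mul, one_mul, h.mul_inv_mul, sub_self]

theorem one_sub_smul_inv_sq_mul_one_sub (h : IsGroupInverse a x) (z : K) :
    (1 - z • x ^ 2) * (1 - a * x) = 1 - a * x := by
  rw [sub_mul (1 : R), one_mul, smul_mul_assoc, mul_sub, mul_one, h.inv_sq_mul_mul_inv, sub_self,
    smul_zero, sub_zero]

theorem resolvent_mul_sub_smul_one (h : IsGroupInverse a x) (hz : z ≠ 0)
    (hu : u * (1 - z • x ^ 2) = 1) :
    (u * x ^ 2 - z⁻¹ • (1 - a * x)) * (a ^ 2 - z • 1) = 1 := by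
  have hu_kernel : u * (1 - a * x) = 1 - a * x := by
    conv_lhs => rw [← h.one_sub_smul_inv_sq_mul_one_sub z, ← mul_assoc, hu, one_mul]
  have hkernel : (1 - a * x) * a ^ 2 = 0 := by
    rw [sq, ← mul_assoc, h.one_sub_mul_inv_mul, zero_mul]
  calc (u * x ^ 2 - z⁻¹ • (1 - a * x)) * (a ^ 2 - z • 1)
      = u * (1 - z • x ^ 2) - u * (1 - a * x) + (1 - a * x) := by
        simp only [sub_mul, mul_sub, mul_assoc, h.inv_sq_mul_sq, smul_mul_assoc, mul_smul_comm,
          hkernel, mul_one, smul_zero]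
        match_scalars <;> simp [hz]
    _ = 1 := by rw [hu, hu_kernel, sub_add_cancel]

theorem resolvent_mul (h : IsGroupInverse a x) :
    (u * x ^ 2 - z⁻¹ • (1 - a * x)) * a = u * x := by
  rw [sub_mul, smul_mul_assoc, h.one_sub_mul_inv_mul, smul_zero, sub_zero, mul_assoc,
    h.inv_sq_mul]

end Algebra

end IsGroupInverse
namespace Matrix

variable {n : Type*} [Fintype n] [DecidableEq n]

theorem inv_smul_of_ne_zero {K : Type*} [Field K] (M : Matrix n n K) {c : K} (hc : c ≠ 0) :
    (c • M)⁻¹ = c⁻¹ • M⁻¹ := by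
  by_cases hM : IsUnit M.det
  · exact M.inv_smul' (Units.mk0 c hc) hM
  · have hcM : ¬IsUnit (c • M).det := by
      simpa [det_smul, hc] using hM
    rw [nonsing_inv_apply_not_isUnit _ hM, nonsing_inv_apply_not_isUnit _ hcM, smul_zero]

variable {𝕜 : Type*} [NormedField 𝕜]

theorem continuousAt_inv_one_sub_smul (B : Matrix n n 𝕜) :
    ContinuousAt (fun w : 𝕜 => (1 - w • B)⁻¹) 0 := by
  refine (continuousAt_matrix_inv _ ?_).comp (by fun_prop)
  simpa [Ring.inverse_eq_inv'] using continuousAt_inv₀ one_ne_zero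

theorem eventually_isUnit_det_one_sub_smul (B : Matrix n n 𝕜) :
    ∀ᶠ w in 𝓝 (0 : 𝕜), IsUnit (1 - w • B).det := by
  have hdet : Continuous fun w : 𝕜 => (1 - w • B).det := by fun_prop
  filter_upwards [hdet.continuousAt.eventually_ne (by simp : (1 - (0 : 𝕜) • B).det ≠ 0)]
    with w hw using hw.isUnit

end Matrix

namespace IsGroupInverse

variable {n : Type*} [Fintype n] [DecidableEq n]

theorem inv_sub_smul_one_mul {K : Type*} [Field K] {A X : Matrix n n K}
    (h : IsGroupInverse A X) {z : K} (hz : z ≠ 0) (hX : IsUnit (1 - z • X ^ 2).det) :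
    (A ^ 2 - z • 1)⁻¹ * A = (1 - z • X ^ 2)⁻¹ * X := by
  rw [Matrix.inv_eq_left_inv (h.resolvent_mul_sub_smul_one hz (Matrix.nonsing_inv_mul _ hX)),
    h.resolvent_mul]

theorem tendsto_inv_sub_smul_one_mul {𝕜 : Type*} [NormedField 𝕜] {A X : Matrix n n 𝕜}
    (h : IsGroupInverse A X) :
    Tendsto (fun z : 𝕜 => (A ^ 2 - z • 1)⁻¹ * A) (𝓝[≠] 0) (𝓝 X) := by
  have hlim : Tendsto (fun w : 𝕜 => (1 - w • X ^ 2)⁻¹ * X) (𝓝 0) (𝓝 X) := by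
    simpa using (Matrix.continuousAt_inv_one_sub_smul (X ^ 2)).tendsto.mul_const X
  refine (tendsto_nhdsWithin_of_tendsto_nhds hlim).congr' ?_
  filter_upwards [nhdsWithin_le_nhds (Matrix.eventually_isUnit_det_one_sub_smul (X ^ 2)),
    self_mem_nhdsWithin] with w hX hw
  exact (h.inv_sub_smul_one_mul hw hX).symm

end IsGroupInverse

theorem drazin_inverse_limit_of_index_one_general
    (n : ℕ) (A : Matrix (Fin n) (Fin n) ℂ)
    (X : Matrix (Fin n) (Fin n) ℂ)
    (h1 : X * A * X = X) (h2 : A * X = X * A) (h3 : A ^ 2 * X = A) :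
    Tendsto (fun z : ℝ => (A ^ 2 - (z : ℂ) • 1)⁻¹ * A)
        (nhdsWithin 0 (Set.Iio 0)) (nhds X) ∧
      Tendsto (fun a : ℝ => (a : ℂ) • ((1 + (a : ℂ) • A ^ 2)⁻¹ * A))
        atTop (nhds X) := by
  have hofReal : Tendsto (fun z : ℝ => (z : ℂ)) (𝓝[<] 0) (𝓝[≠] 0) :=
    tendsto_nhdsWithin_iff.mpr ⟨Complex.continuous_ofReal.tendsto' 0 0 Complex.ofReal_zero
        |>.mono_left nhdsWithin_le_nhds,
      eventually_nhdsWithin_of_forall fun z hz => Complex.ofReal_ne_zero.mpr hz.ne⟩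
  have hleft := (IsGroupInverse.tendsto_inv_sub_smul_one_mul ⟨h1, h2, h3⟩).comp hofReal
  refine ⟨hleft, ?_⟩
  have hneg_inv : Tendsto (fun a : ℝ => -a⁻¹) atTop (𝓝[<] 0) := by
    have hneg := tendsto_neg_nhdsGT_neg (a := (0 : ℝ))
    rw [neg_zero] at hneg
    exact hneg.comp tendsto_inv_atTop_nhdsGT_zero
  refine (hleft.comp hneg_inv).congr' ?_
  filter_upwards [eventually_gt_atTop 0] with a ha
  have ha' : (a : ℂ) ≠ 0 := Complex.ofReal_ne_zero.mpr ha.ne'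
  have hfactor : 1 + (a : ℂ) • A ^ 2 = (a : ℂ) • (A ^ 2 - ((-a⁻¹ : ℝ) : ℂ) • 1) := by
    rw [smul_sub, smul_smul]
    push_cast
    rw [mul_neg, mul_inv_cancel₀ ha', neg_smul, one_smul, sub_neg_eq_add, add_comm]
  simp only [Function.comp_apply, hfactor, Matrix.inv_smul_of_ne_zero _ ha', smul_mul_assoc,
    smul_smul, mul_inv_cancel₀ ha', one_smul]

/-- For a square matrix `A` of index 1 (`rank A = rank A²`), the Drazin inverse
is given by the limit `A_D⁻¹ = lim_{z→0⁻} (A² - z•1)⁻¹ * A`, equivalently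
`lim_{a→∞} a • ((1 + a•A²)⁻¹ * A)`. -/
theorem drazin_inverse_limit_of_index_one
    (n : ℕ) (A : Matrix (Fin n) (Fin n) ℂ)
    (hind : A.rank = (A ^ 2).rank)
    (X : Matrix (Fin n) (Fin n) ℂ)
    (h1 : X * A * X = X) (h2 : A * X = X * A) (h3 : A ^ 2 * X = A) :
    Tendsto (fun z : ℝ => (A ^ 2 - (z : ℂ) • 1)⁻¹ * A)
        (nhdsWithin 0 (Set.Iio 0)) (nhds X) ∧
      Tendsto (fun a : ℝ => (a : ℂ) • ((1 + (a : ℂ) • A ^ 2)⁻¹ * A))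
        atTop (nhds X) :=
  drazin_inverse_limit_of_index_one_general n A X h1 h2 h3
end

section
/- For a square matrix A of index 1, the limit lim_{λ→0} (A + λI)^{-1} A exists and equals A_D^{-1} A, where A_D^{-1} is the Drazin inverse of A. -/
open Filter Topology

set_option maxHeartbeats 800000


private lemma comm_inv_aux {n : ℕ} {B C : Matrix (Fin n) (Fin n) ℂ}
    (h : B * C = C * B) (hv : IsUnit C.det) : B * C⁻¹ = C⁻¹ * B := by
  calc B * C⁻¹ = C⁻¹ * C * (B * C⁻¹) := by
        rw [Matrix.nonsing_inv_mul _ hv, Matrix.one_mul]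
    _ = C⁻¹ * (C * B * C⁻¹) := by simp only [Matrix.mul_assoc]
    _ = C⁻¹ * (B * (C * C⁻¹)) := by rw [← h]; simp only [Matrix.mul_assoc]
    _ = C⁻¹ * B := by rw [Matrix.mul_nonsing_inv _ hv, Matrix.mul_one]

/-- For a square matrix `A` of index 1, the limit `lim_{λ→0} (A + λ•1)⁻¹ * A`
(along `λ ≠ 0`) exists and equals `A_D⁻¹ * A`, where `A_D⁻¹` is the Drazin
inverse of `A`. -/
theorem resolvent_limit_eq_drazin_mul
    (n : ℕ) (A : Matrix (Fin n) (Fin n) ℂ)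
    (hind : A.rank = (A ^ 2).rank)
    (X : Matrix (Fin n) (Fin n) ℂ)
    (h1 : X * A * X = X) (h2 : A * X = X * A) (h3 : A ^ 2 * X = A) :
    Tendsto (fun l : ℂ => (A + l • 1)⁻¹ * A)
      (nhdsWithin 0 {(0 : ℂ)}ᶜ) (nhds (X * A)) := by
  classical
  have hXA2 : X * A ^ 2 = A := by
    have : Commute A X := h2
    rw [← (this.pow_left 2).eq, h3]
  -- key algebraic identity
  have key : ∀ l : ℂ, IsUnit (A + l • (1 : Matrix (Fin n) (Fin n) ℂ)).det →
      IsUnit ((1 : Matrix (Fin n) (Fin n) ℂ) + l • X).det →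
      (A + l • 1)⁻¹ * A = X * (((1 : Matrix (Fin n) (Fin n) ℂ) + l • X)⁻¹ * A) := by
    intro l hu hv
    set C : Matrix (Fin n) (Fin n) ℂ := 1 + l • X with hC
    have hcommXC : X * C = C * X := by
      simp [hC, Matrix.mul_add, Matrix.add_mul, Matrix.mul_smul, Matrix.smul_mul]
    have hcommAC : (A + l • 1) * C = C * (A + l • 1) := by
      simp only [hC, Matrix.mul_add, Matrix.add_mul, Matrix.mul_smul, Matrix.smul_mul,
        Matrix.mul_one, Matrix.one_mul, h2, smul_add, smul_smul]
      abel
    have hXCinv : X * C⁻¹ = C⁻¹ * X := comm_inv_aux hcommXC hv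
    have hACinv : (A + l • 1) * C⁻¹ = C⁻¹ * (A + l • 1) := comm_inv_aux hcommAC hv
    have hAX : (A + l • 1) * X = X * (A + l • 1) := by
      simp [Matrix.add_mul, Matrix.mul_add, Matrix.smul_mul, Matrix.mul_smul, h2]
    have main : (A + l • 1) * (X * (C⁻¹ * A)) = A := by
      calc (A + l • 1) * (X * (C⁻¹ * A))
          = X * (A + l • 1) * C⁻¹ * A := by
            rw [← Matrix.mul_assoc, ← Matrix.mul_assoc, hAX]
        _ = X * C⁻¹ * ((A + l • 1) * A) := by
            rw [Matrix.mul_assoc X, hACinv, ← Matrix.mul_assoc, ← Matrix.mul_assoc,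
              Matrix.mul_assoc (X * C⁻¹)]
        _ = C⁻¹ * (X * ((A + l • 1) * A)) := by rw [hXCinv, Matrix.mul_assoc]
        _ = C⁻¹ * (C * A) := by
            congr 1
            have : X * ((A + l • 1) * A) = X * A ^ 2 + l • (X * A) := by
              simp [Matrix.add_mul, Matrix.mul_add, Matrix.smul_mul, Matrix.mul_smul,
                pow_two, Matrix.mul_assoc]
            rw [this, hXA2, hC, Matrix.add_mul, Matrix.one_mul, Matrix.smul_mul]
        _ = A := by rw [← Matrix.mul_assoc, Matrix.nonsing_inv_mul _ hv, Matrix.one_mul]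
    calc (A + l • 1)⁻¹ * A = (A + l • 1)⁻¹ * ((A + l • 1) * (X * (C⁻¹ * A))) := by rw [main]
      _ = X * (C⁻¹ * A) := Matrix.nonsing_inv_mul_cancel_left _ _ hu
  -- eventually both determinants are units
  have ev1 : ∀ᶠ l in nhdsWithin (0 : ℂ) {(0 : ℂ)}ᶜ,
      IsUnit (A + l • (1 : Matrix (Fin n) (Fin n) ℂ)).det := by
    have hS : (spectrum ℂ A).Finite := A.finite_spectrum
    have hT : IsClosed (Neg.neg ⁻¹' (spectrum ℂ A \ {0}) : Set ℂ) :=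
      ((hS.subset Set.diff_subset).isClosed).preimage continuous_neg
    have h0 : (0 : ℂ) ∈ (Neg.neg ⁻¹' (spectrum ℂ A \ {0}))ᶜ := by simp
    have hmem : (Neg.neg ⁻¹' (spectrum ℂ A \ {0}))ᶜ ∈ nhds (0 : ℂ) :=
      hT.isOpen_compl.mem_nhds h0
    filter_upwards [nhdsWithin_le_nhds hmem, self_mem_nhdsWithin] with l hl hl0
    have hlnot : -l ∉ spectrum ℂ A := by
      intro hmem'
      exact hl ⟨hmem', by simpa using hl0⟩
    have := spectrum.notMem_iff.mp hlnot
    rw [Algebra.algebraMap_eq_smul_one] at this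
    have h' : IsUnit (-((-l) • (1 : Matrix (Fin n) (Fin n) ℂ) - A)) := this.neg
    have h'' : IsUnit (A + l • (1 : Matrix (Fin n) (Fin n) ℂ)) := by
      simpa [neg_sub, sub_eq_add_neg, neg_smul] using h'
    exact (Matrix.isUnit_iff_isUnit_det _).mp h''
  have ev2 : ∀ᶠ l in nhdsWithin (0 : ℂ) {(0 : ℂ)}ᶜ,
      IsUnit ((1 : Matrix (Fin n) (Fin n) ℂ) + l • X).det := by
    have hc : ContinuousAt (fun l : ℂ => ((1 : Matrix (Fin n) (Fin n) ℂ) + l • X).det) 0 := by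
      exact (Continuous.matrix_det
        (continuous_const.add (continuous_id.smul continuous_const))).continuousAt
    have := hc.eventually_ne (y := 0) (by simp)
    filter_upwards [nhdsWithin_le_nhds this] with l hl
    exact isUnit_iff_ne_zero.mpr hl
  -- the continuous substitute tends to X * A
  have hlim : Tendsto (fun l : ℂ => X * (((1 : Matrix (Fin n) (Fin n) ℂ) + l • X)⁻¹ * A))
      (nhdsWithin 0 {(0 : ℂ)}ᶜ) (nhds (X * A)) := by
    have hcont : ContinuousAt
        (fun l : ℂ => X * (((1 : Matrix (Fin n) (Fin n) ℂ) + l • X)⁻¹ * A)) 0 := by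
      have h1c : ContinuousAt (fun l : ℂ => (1 : Matrix (Fin n) (Fin n) ℂ) + l • X) 0 :=
        (continuous_const.add (continuous_id.smul continuous_const)).continuousAt
      have hinv : ContinuousAt Inv.inv
          ((1 : Matrix (Fin n) (Fin n) ℂ) + (0 : ℂ) • X) := by
        apply continuousAt_matrix_inv
        have : ((1 : Matrix (Fin n) (Fin n) ℂ) + (0 : ℂ) • X).det = 1 := by simp
        rw [this]
        exact NormedRing.inverse_continuousAt (1 : ℂˣ)
      have houter : Continuous (fun M : Matrix (Fin n) (Fin n) ℂ => X * (M * A)) :=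
        continuous_const.matrix_mul (continuous_id.matrix_mul continuous_const)
      have hinvc : ContinuousAt (fun l : ℂ => ((1 : Matrix (Fin n) (Fin n) ℂ) + l • X)⁻¹) 0 :=
        ContinuousAt.comp (g := Inv.inv)
          (f := fun l : ℂ => (1 : Matrix (Fin n) (Fin n) ℂ) + l • X) hinv h1c
      exact houter.continuousAt.comp hinvc
    have := hcont.tendsto
    simp only [zero_smul, add_zero, inv_one, Matrix.one_mul] at this
    exact this.mono_left nhdsWithin_le_nhds
  refine hlim.congr' ?_ |>.mono_left le_rfl
  · filter_upwards [ev1, ev2] with l hu hv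
    exact (key l hu hv).symm
end

section
/- Let L be the backward generator of an irreducible Markov jump process on a finite connected graph G with N vertices, with rates k(x,y). Then the entries of the resolvent satisfy ((I + αL)^{-1})_{xy} = (∑_{k=0}^{N-1} (-1)^k α^k w(F_k^{x→y})) / (∑_{k=0}^{N-1} (-1)^k α^k w(F_k)) for α > 0, where F_k^{x→y} is the set of spanning forests of G with k edges in which every tree is rooted, y is the root of its tree, and x, y lie in the same tree, and F_k is the union over all roots; weights w are products of rates k(x,y) over the directed edges of the forest (empty product = 1). -/
open Matrix


/-- The one-step relation of a finite set of directed edges. -/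
def forestStep {V : Type*} (F : Finset (V × V)) (a b : V) : Prop := (a, b) ∈ F

/-- `F` is a rooted spanning forest of the graph `G`: all its directed edges
are edges of `G`, every vertex has at most one outgoing edge, and there are no
directed cycles (so each connected component is a tree directed toward its
root). -/
def IsRootedForest {V : Type*} [DecidableEq V] (G : SimpleGraph V)
    (F : Finset (V × V)) : Prop :=
  (∀ e ∈ F, G.Adj e.1 e.2) ∧
  (∀ x : V, (F.filter (fun e => e.1 = x)).card ≤ 1) ∧
  (∀ x y : V, (x, y) ∈ F → ¬ Relation.ReflTransGen (forestStep F) y x)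

/-- `x` and `y` lie in the same tree of `F` and `y` is the root of that tree:
there is a directed path from `x` to `y` and `y` has no outgoing edge. -/
def RootedAt {V : Type*} (F : Finset (V × V)) (x y : V) : Prop :=
  Relation.ReflTransGen (forestStep F) x y ∧ ∀ z, (y, z) ∉ F

/-- The weight of a forest: the product of the rates over its directed edges
(empty product `= 1`). -/
def forestWeight {V : Type*} (k : V → V → ℝ) (F : Finset (V × V)) : ℝ :=
  ∏ e ∈ F, k e.1 e.2

/-- The total weight of the collection of forests satisfying `P`. -/
noncomputable def weightSum {V : Type*} [Fintype V] [DecidableEq V]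
    (k : V → V → ℝ) (P : Finset (V × V) → Prop) : ℝ :=
  ∑ F : Finset (V × V), Set.indicator {F | P F} (forestWeight k) F

/-!
Row `i` of `1 + αL` is `eᵢ - α ∑_{z ≠ i} k(i,z) (eᵢ - e_z)`. Expanding the determinant
multilinearly in the rows gives a sum over all maps `r : V → V` (row `i` picks `eᵢ` when
`r i = i` and `eᵢ - e_{r i}` otherwise) of `(-α)^{#moved} ∏ k(i, r i)` times the determinant of
the chosen rows. That determinant is `1` when the functional graph `i → r i` (`r i ≠ i`) has no
cycle, because only the identity permutation contributes, and `0` otherwise, because the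
indicator of the vertices that reach no fixed point is a kernel vector. Acyclic functional
graphs are exactly the rooted spanning forests, the fixed points being the roots.

For the numerator, `((1 + αL)⁻¹)_{xy}` is the determinant with row `y` replaced by `e_x`,
divided by `det (1 + αL)`. The same expansion forces `r y = y`, and replacing the row `e_y` by
`e_x` costs `det E_r - det E_{r[y ↦ x]}`, which is `1` exactly when `r` is acyclic and `x`
reaches `y`.
-/

open Finset Relation

namespace Relation

variable {α : Type*} {R R' : α → α → Prop} {a b y : α}

theorem TransGen.self_of_reflTransGen (hR : ∀ a b c, R a b → R a c → b = c)
    (hcyc : TransGen R a a) (h : ReflTransGen R a b) : TransGen R b b := by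
  induction h with
  | refl => exact hcyc
  | tail _ hbc ih =>
    obtain ⟨d, hbd, hdb⟩ := TransGen.head'_iff.mp ih
    rw [hR _ _ _ hbd hbc] at hdb
    exact TransGen.tail' hdb hbc

theorem TransGen.or_reflTransGen_of_forall_ne (hR : ∀ a b, R' a b → a ≠ y → R a b)
    (h : TransGen R' a b) : TransGen R a b ∨ ReflTransGen R a y := by
  induction h using TransGen.head_induction_on with
  | @single a hab =>
    by_cases ha : a = y
    · exact .inr (ha ▸ .refl)
    · exact .inl (.single (hR _ _ hab ha))
  | @head a c hac _ ih =>
    by_cases ha : a = y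
    · exact .inr (ha ▸ .refl)
    · exact ih.imp (.head (hR _ _ hac ha)) (.head (hR _ _ hac ha))

end Relation

def IsAcyclic {V : Type*} (F : Finset (V × V)) : Prop :=
  ∀ a, ¬TransGen (forestStep F) a a

theorem isAcyclic_iff {V : Type*} {F : Finset (V × V)} :
    IsAcyclic F ↔ ∀ a b, (a, b) ∈ F → ¬ReflTransGen (forestStep F) b a := by
  simp only [IsAcyclic, TransGen.head'_iff, forestStep]
  grind

section FunGraph

variable {V : Type*} [Fintype V] [DecidableEq V]

def funGraph (r : V → V) : Finset (V × V) :=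
  ({i | r i ≠ i} : Finset V).image fun i => (i, r i)

@[simp]
theorem mem_funGraph {r : V → V} {a b : V} : (a, b) ∈ funGraph r ↔ r a ≠ a ∧ r a = b := by
  simp [funGraph]

theorem forestStep_funGraph {r : V → V} {a b : V} :
    forestStep (funGraph r) a b ↔ r a ≠ a ∧ r a = b :=
  mem_funGraph

theorem forestStep_funGraph_functional (r : V → V) (a b c : V)
    (hb : forestStep (funGraph r) a b) (hc : forestStep (funGraph r) a c) : b = c := by
  rw [forestStep_funGraph] at hb hc
  rw [← hb.2, hc.2]

theorem funGraph_injective : Function.Injective (funGraph : (V → V) → Finset (V × V)) := by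
  intro r s h
  funext a
  by_contra hne
  rcases eq_or_ne (r a) a with hr | hr
  · have : (a, s a) ∈ funGraph r :=
      h ▸ mem_funGraph.mpr ⟨fun hs => hne (hr.trans hs.symm), rfl⟩
    exact (mem_funGraph.mp this).1 hr
  · have : (a, r a) ∈ funGraph s := h ▸ mem_funGraph.mpr ⟨hr, rfl⟩
    exact hne (mem_funGraph.mp this).2.symm

theorem isRootedForest_funGraph_iff {G : SimpleGraph V} {r : V → V} :
    IsRootedForest G (funGraph r) ↔
      (∀ e ∈ funGraph r, G.Adj e.1 e.2) ∧ IsAcyclic (funGraph r) := by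
  have hout : ∀ a, ((funGraph r).filter fun e => e.1 = a).card ≤ 1 := by
    refine fun a => Finset.card_le_one.mpr fun ⟨b, c⟩ hbc ⟨d, e⟩ hde => ?_
    simp only [mem_filter, mem_funGraph] at hbc hde
    obtain ⟨⟨-, rfl⟩, rfl⟩ := hbc
    obtain ⟨⟨-, rfl⟩, rfl⟩ := hde
    rfl
  rw [IsRootedForest, isAcyclic_iff]
  exact ⟨fun h => ⟨h.1, h.2.2⟩, fun h => ⟨h.1, hout, h.2⟩⟩

theorem IsRootedForest.exists_funGraph_eq {G : SimpleGraph V} {F : Finset (V × V)}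
    (hF : IsRootedForest G F) : ∃ r, funGraph r = F := by
  have hloop : ∀ a, (a, a) ∉ F := fun a ha => hF.2.2 a a ha .refl
  have huniq : ∀ a b c, (a, b) ∈ F → (a, c) ∈ F → b = c := fun a b c hb hc =>
    congrArg Prod.snd (card_le_one.mp (hF.2.1 a) (a, b) (by simp [hb]) (a, c) (by simp [hc]))
  classical
  refine ⟨fun a => if h : ∃ b, (a, b) ∈ F then h.choose else a, ?_⟩
  ext ⟨a, b⟩
  rw [mem_funGraph]
  by_cases h : ∃ b, (a, b) ∈ F
  · simp only [dif_pos h]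
    have hs := h.choose_spec
    refine ⟨fun ⟨_, hb⟩ => hb ▸ hs, fun hab => ⟨fun heq => ?_, huniq _ _ _ hs hab⟩⟩
    exact hloop a (by rwa [heq] at hs)
  · simp only [dif_neg h, ne_eq, not_true_eq_false, false_and, false_iff]
    exact fun hab => h ⟨b, hab⟩

theorem IsAcyclic.exists_apply_eq_self [Nonempty V] {r : V → V}
    (hr : IsAcyclic (funGraph r)) : ∃ v, r v = v := by
  let reachedFrom := fun a b => TransGen (forestStep (funGraph r)) b a
  have : IsTrans V reachedFrom := ⟨fun _ _ _ hab hbc => hbc.trans hab⟩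
  have : Std.Irrefl reachedFrom := ⟨hr⟩
  obtain ⟨v, -, hv⟩ :=
    (Finite.wellFounded_of_trans_of_irrefl reachedFrom).has_min Set.univ Set.univ_nonempty
  by_contra! hne
  exact hv (r v) trivial (.single (forestStep_funGraph.mpr ⟨hne v, rfl⟩))

theorem IsRootedForest.card_lt [Nonempty V] {G : SimpleGraph V} {F : Finset (V × V)}
    (hF : IsRootedForest G F) : F.card < Fintype.card V := by
  obtain ⟨r, rfl⟩ := hF.exists_funGraph_eq
  obtain ⟨v, hv⟩ := (isRootedForest_funGraph_iff.mp hF).2.exists_apply_eq_self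
  calc (funGraph r).card ≤ ({i | r i ≠ i} : Finset V).card := card_image_le
    _ < Fintype.card V := card_lt_univ_of_notMem (x := v) (by simp [hv])

end FunGraph

section ChoiceMatrix

variable {V R : Type*} [DecidableEq V] [CommRing R]

variable (R) in
def edgeRow (i z : V) : V → R :=
  if z = i then Pi.single i 1 else Pi.single i 1 - Pi.single z 1

variable (R) in
def choiceMatrix (r : V → V) : Matrix V V R :=
  of fun i => edgeRow R i (r i)

theorem choiceMatrix_apply_self (r : V → V) (i : V) : choiceMatrix R r i i = 1 := by
  by_cases h : r i = i
  · simp [choiceMatrix, edgeRow, h]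
  · simp [choiceMatrix, edgeRow, h, Ne.symm h]

theorem choiceMatrix_apply_of_ne (r : V → V) {i j : V} (hi : j ≠ i) (hr : j ≠ r i) :
    choiceMatrix R r i j = 0 := by
  by_cases h : r i = i <;> simp [choiceMatrix, edgeRow, h, hi, hr]

variable [Fintype V]

theorem IsAcyclic.eq_one_of_forall_eq_or_eq {r : V → V} (hr : IsAcyclic (funGraph r))
    {σ : Equiv.Perm V} (hσ : ∀ i, σ i = i ∨ σ i = r i) : σ = 1 := by
  by_contra hne
  obtain ⟨i, hi⟩ : ∃ i, σ i ≠ i := by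
    by_contra! h
    exact hne (Equiv.ext h)
  have hstep : ∀ n : ℕ, forestStep (funGraph r) ((σ ^ n) i) ((σ ^ (n + 1)) i) := by
    intro n
    have hmove : σ ((σ ^ n) i) ≠ (σ ^ n) i := fun h => hi <| (σ ^ n).injective <| by
      rw [← Equiv.Perm.mul_apply, ← pow_succ, pow_succ', Equiv.Perm.mul_apply, h]
    rw [pow_succ', Equiv.Perm.mul_apply, forestStep_funGraph]
    exact ((hσ _).resolve_left hmove) ▸ ⟨hmove, rfl⟩
  have hpath : ∀ n : ℕ, TransGen (forestStep (funGraph r)) i ((σ ^ (n + 1)) i) := by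
    intro n
    induction n with
    | zero => exact .single (by simpa using hstep 0)
    | succ n ih => exact ih.tail (hstep (n + 1))
  have hcyc := hpath (orderOf σ - 1)
  rw [Nat.sub_add_cancel (orderOf_pos σ), pow_orderOf_eq_one] at hcyc
  exact hr i hcyc

theorem choiceMatrix_mulVec (r : V → V) (v : V → R) (i : V) :
    (choiceMatrix R r *ᵥ v) i = if r i = i then v i else v i - v (r i) := by
  change edgeRow R i (r i) ⬝ᵥ v = _
  by_cases h : r i = i <;> simp [edgeRow, h, sub_dotProduct]

theorem det_choiceMatrix_of_isAcyclic {r : V → V} (hr : IsAcyclic (funGraph r)) :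
    (choiceMatrix R r).det = 1 := by
  rw [← det_transpose, det_apply, Finset.sum_eq_single 1 ?_ (by simp)]
  · simp [choiceMatrix_apply_self]
  · intro σ _ hσ
    obtain ⟨i, hi⟩ : ∃ i, choiceMatrix R r i (σ i) = 0 := by
      by_contra! h
      refine hσ (hr.eq_one_of_forall_eq_or_eq fun i => ?_)
      by_contra! hne
      exact h i (choiceMatrix_apply_of_ne r hne.1 hne.2)
    simp only [transpose_apply]
    rw [prod_eq_zero (mem_univ i) hi, smul_zero]

theorem det_choiceMatrix_of_not_isAcyclic {r : V → V} (hr : ¬IsAcyclic (funGraph r)) :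
    (choiceMatrix R r).det = 0 := by
  classical
  obtain ⟨j, hj⟩ : ∃ j, TransGen (forestStep (funGraph r)) j j := by
    simpa [IsAcyclic] using hr
  let ReachesRoot a := ∃ z, ReflTransGen (forestStep (funGraph r)) a z ∧ r z = z
  have hmove : ∀ i, r i ≠ i → (ReachesRoot i ↔ ReachesRoot (r i)) := by
    intro i hi
    simp only [ReachesRoot, ReflTransGen.cases_head_iff (a := i), forestStep_funGraph]
    grind
  have hj : ¬ReachesRoot j := fun ⟨z, hjz, hz⟩ => by
    obtain ⟨c, hzc, -⟩ :=
      TransGen.head'_iff.mp (hj.self_of_reflTransGen (forestStep_funGraph_functional r) hjz)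
    exact (forestStep_funGraph.mp hzc).1 hz
  refine det_eq_zero_of_mulVec_eq_zero_of_mem_nonZeroDivisors
    (v := fun a => if ReachesRoot a then 0 else 1) (i := j) ?_ (by simp [hj])
  funext i
  rw [choiceMatrix_mulVec]
  by_cases hi : r i = i
  · simp [hi, show ReachesRoot i from ⟨i, .refl, hi⟩]
  · simp [hi, hmove i hi]

open scoped Classical in
theorem det_choiceMatrix (r : V → V) :
    (choiceMatrix R r).det = if IsAcyclic (funGraph r) then 1 else 0 := by
  split_ifs with h
  exacts [det_choiceMatrix_of_isAcyclic h, det_choiceMatrix_of_not_isAcyclic h]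

theorem isAcyclic_funGraph_update_iff {r : V → V} {x y : V} (hy : r y = y) (hxy : x ≠ y) :
    IsAcyclic (funGraph (Function.update r y x)) ↔
      IsAcyclic (funGraph r) ∧ ¬ReflTransGen (forestStep (funGraph r)) x y := by
  set r' := Function.update r y x
  have hle : ∀ a b, forestStep (funGraph r) a b → forestStep (funGraph r') a b := by
    intro a b hab
    have ha : a ≠ y := by rintro rfl; exact (forestStep_funGraph.mp hab).1 hy
    simpa [forestStep_funGraph, r', ha] using hab
  have hge : ∀ a b, forestStep (funGraph r') a b → a ≠ y → forestStep (funGraph r) a b := by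
    intro a b hab ha
    simpa [forestStep_funGraph, r', ha] using hab
  have hyx : forestStep (funGraph r') y x := by simp [forestStep_funGraph, r', hxy]
  constructor
  · intro h'
    exact ⟨fun a ha => h' a (TransGen.mono hle _ _ ha),
      fun hreach => h' y (.head' hyx (ReflTransGen.mono hle _ _ hreach))⟩
  · -- a cycle that is new must pass through `y` and leave it towards `x`
    rintro ⟨h, hreach⟩ a ha
    rcases ha.or_reflTransGen_of_forall_ne hge with ha | hay
    · exact h a ha
    have hyy := ha.self_of_reflTransGen (forestStep_funGraph_functional r')
      (ReflTransGen.mono hle _ _ hay)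
    obtain ⟨c, hyc, hcy⟩ := TransGen.head'_iff.mp hyy
    rw [forestStep_funGraph_functional r' _ _ _ hyc hyx] at hcy
    rcases reflTransGen_iff_eq_or_transGen.mp hcy with rfl | hxy'
    · exact hxy rfl
    · exact hreach ((hxy'.or_reflTransGen_of_forall_ne hge).elim TransGen.to_reflTransGen id)

open scoped Classical in
theorem det_updateRow_choiceMatrix {r : V → V} {y : V} (hy : r y = y) (x : V) :
    (updateRow (choiceMatrix R r) y (Pi.single x 1)).det =
      if IsAcyclic (funGraph r) ∧ ReflTransGen (forestStep (funGraph r)) x y then 1 else 0 := by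
  have hrow : choiceMatrix R r y = Pi.single y 1 := by
    change edgeRow R y (r y) = _
    rw [hy, edgeRow, if_pos rfl]
  rcases eq_or_ne x y with rfl | hxy
  · simp [← hrow, det_choiceMatrix, ReflTransGen.refl]
  have hupdate : choiceMatrix R (Function.update r y x) =
      updateRow (choiceMatrix R r) y (Pi.single y 1 + (-1 : R) • Pi.single x 1) := by
    ext i j
    rcases eq_or_ne i y with rfl | hi
    · simp [choiceMatrix, edgeRow, hxy, sub_eq_add_neg]
    · simp [choiceMatrix, hi]
  have hsplit := congrArg det hupdate
  rw [det_updateRow_add, det_updateRow_smul, ← hrow, updateRow_eq_self] at hsplit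
  rw [det_choiceMatrix, det_choiceMatrix, isAcyclic_funGraph_update_iff hy hxy] at hsplit
  split_ifs at hsplit ⊢ <;> grind

end ChoiceMatrix

theorem Matrix.det_of_sum_smul {n ι R : Type*} [Fintype n] [DecidableEq n] [Fintype ι]
    [CommRing R] (c : n → ι → R) (ρ : n → ι → n → R) :
    det (of fun i => ∑ z, c i z • ρ i z) =
      ∑ r : n → ι, (∏ i, c i (r i)) * det (of fun i => ρ i (r i)) := by
  change detRowAlternating.toMultilinearMap (fun i => ∑ z, c i z • ρ i z) = _
  rw [MultilinearMap.map_sum]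
  refine Finset.sum_congr rfl fun r _ => ?_
  rw [MultilinearMap.map_smul_univ, smul_eq_mul]
  rfl

section Generator

variable {V : Type*} [Fintype V] [DecidableEq V] {k : V → V → ℝ} {L : Matrix V V ℝ}

def edgeCoeff (α : ℝ) (k : V → V → ℝ) (i z : V) : ℝ :=
  if z = i then 1 else -(α * k i z)

theorem prod_edgeCoeff (α : ℝ) (k : V → V → ℝ) (r : V → V) :
    ∏ i, edgeCoeff α k i (r i) = (-α) ^ (funGraph r).card * forestWeight k (funGraph r) := by
  have hinj : Set.InjOn (fun i => (i, r i)) ({i | r i ≠ i} : Finset V) :=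
    fun i _ j _ h => congrArg Prod.fst h
  have hroots : ∀ i ∈ univ, i ∉ ({i | r i ≠ i} : Finset V) → edgeCoeff α k i (r i) = 1 :=
    fun i _ hi => by simp_all [edgeCoeff]
  rw [forestWeight, funGraph, card_image_of_injOn hinj, prod_image hinj, ← prod_const,
    ← prod_mul_distrib, ← prod_subset (subset_univ _) hroots]
  exact prod_congr rfl fun i hi => by simp_all [edgeCoeff]

theorem one_add_smul_eq_of_sum_edgeRow
    (hL : ∀ x y, L x y = if x = y then -(∑ z ∈ univ.erase x, k x z) else k x y) (α : ℝ) :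
    1 + α • L = of fun i => ∑ z, edgeCoeff α k i z • edgeRow ℝ i z := by
  ext i j
  rw [of_apply, Finset.sum_apply, ← add_sum_erase univ _ (mem_univ i)]
  have hoff : ∀ z ∈ univ.erase i, (edgeCoeff α k i z • edgeRow ℝ i z) j =
      α * k i z * ((if j = z then 1 else 0) - if j = i then 1 else 0) := fun z hz => by
    simp only [edgeCoeff, edgeRow, if_neg (ne_of_mem_erase hz), Pi.smul_apply, Pi.sub_apply,
      Pi.single_apply, smul_eq_mul]
    ring
  rw [sum_congr rfl hoff]
  simp only [mul_sub, sum_sub_distrib, mul_ite, mul_one, mul_zero, sum_ite_eq]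
  rcases eq_or_ne j i with rfl | hji
  · simp [edgeCoeff, edgeRow, hL, mul_sub, mul_sum]
  · simp [edgeCoeff, edgeRow, hL, hji, Ne.symm hji]

theorem rootedAt_funGraph_iff {r : V → V} {x y : V} :
    RootedAt (funGraph r) x y ↔ ReflTransGen (forestStep (funGraph r)) x y ∧ r y = y := by
  simp [RootedAt]

open scoped Classical in
theorem det_one_add_smul_eq_sum
    (hL : ∀ x y, L x y = if x = y then -(∑ z ∈ univ.erase x, k x z) else k x y) (α : ℝ) :
    (1 + α • L).det = ∑ r : V → V,
      if IsAcyclic (funGraph r) then (-α) ^ (funGraph r).card * forestWeight k (funGraph r)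
      else 0 := by
  rw [one_add_smul_eq_of_sum_edgeRow hL, det_of_sum_smul]
  refine sum_congr rfl fun r _ => ?_
  change _ * (choiceMatrix ℝ r).det = _
  rw [prod_edgeCoeff, det_choiceMatrix]
  split_ifs <;> simp

open scoped Classical in
theorem det_updateRow_one_add_smul_eq_sum
    (hL : ∀ x y, L x y = if x = y then -(∑ z ∈ univ.erase x, k x z) else k x y) (α : ℝ)
    (x y : V) :
    (updateRow (1 + α • L) y (Pi.single x 1)).det = ∑ r : V → V,
      if IsAcyclic (funGraph r) ∧ RootedAt (funGraph r) x y then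
        (-α) ^ (funGraph r).card * forestWeight k (funGraph r)
      else 0 := by
  have hrows : updateRow (1 + α • L) y (Pi.single x 1) = of fun i => ∑ z,
      (if i = y then (Pi.single y 1 : V → ℝ) z else edgeCoeff α k i z) •
        (if i = y then Pi.single x 1 else edgeRow ℝ i z) := by
    rw [one_add_smul_eq_of_sum_edgeRow hL]
    ext i j
    rcases eq_or_ne i y with rfl | hi
    · simp
    · simp [hi]
  rw [hrows, det_of_sum_smul]
  refine sum_congr rfl fun r _ => ?_
  by_cases hry : r y = y
  · have hprod :
        ∏ i, (if i = y then (Pi.single y 1 : V → ℝ) (r i) else edgeCoeff α k i (r i)) =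
          ∏ i, edgeCoeff α k i (r i) :=
      prod_congr rfl fun i _ => by split_ifs with h <;> simp [h, hry, edgeCoeff]
    have hmat : (of fun i => if i = y then Pi.single x 1 else edgeRow ℝ i (r i)) =
        updateRow (choiceMatrix ℝ r) y (Pi.single x 1) := by
      ext i j
      rcases eq_or_ne i y with rfl | hi
      · simp
      · simp [choiceMatrix, hi]
    rw [hprod, hmat, prod_edgeCoeff, det_updateRow_choiceMatrix hry, rootedAt_funGraph_iff]
    split_ifs <;> simp_all
  · rw [prod_eq_zero (mem_univ y) (by simp [hry]), zero_mul, if_neg]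
    exact fun h => hry (rootedAt_funGraph_iff.mp h.2).2

end Generator

section Transfer

variable {V : Type*} [Fintype V] [DecidableEq V]

open scoped Classical in
theorem sum_funGraph_eq_sum_isRootedForest {M : Type*} [AddCommMonoid M] {G : SimpleGraph V}
    (Q : Finset (V × V) → Prop) (f : Finset (V × V) → M)
    (hf : ∀ F, ∀ e ∈ F, ¬G.Adj e.1 e.2 → f F = 0) :
    ∑ r : V → V, (if IsAcyclic (funGraph r) ∧ Q (funGraph r) then f (funGraph r) else 0) =
      ∑ F : Finset (V × V), if IsRootedForest G F ∧ Q F then f F else 0 := by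
  rw [← sum_subset (subset_univ (univ.image funGraph)),
    sum_image fun r _ s _ h => funGraph_injective h]
  · refine sum_congr rfl fun r _ => ?_
    rw [isRootedForest_funGraph_iff]
    by_cases hG : ∀ e ∈ funGraph r, G.Adj e.1 e.2
    · simp only [and_iff_right hG]
    · obtain ⟨e, he, hne⟩ := not_forall₂.mp hG
      simp [hf _ e he hne]
  · intro F _ hF
    rw [if_neg]
    rintro ⟨hrf, -⟩
    obtain ⟨r, rfl⟩ := hrf.exists_funGraph_eq
    exact hF (mem_image_of_mem _ (mem_univ r))

open scoped Classical in
theorem sum_range_weightSum_eq [Nonempty V] (G : SimpleGraph V) (k : V → V → ℝ) (α : ℝ)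
    (Q : Finset (V × V) → Prop) :
    ∑ j ∈ range (Fintype.card V), (-1 : ℝ) ^ j * α ^ j *
        weightSum k (fun F => IsRootedForest G F ∧ F.card = j ∧ Q F) =
      ∑ F : Finset (V × V),
        if IsRootedForest G F ∧ Q F then (-α) ^ F.card * forestWeight k F else 0 := by
  simp only [weightSum, Set.indicator_apply, Set.mem_ofPred_eq, mul_sum]
  rw [sum_comm]
  refine sum_congr rfl fun F _ => ?_
  by_cases hF : IsRootedForest G F ∧ Q F
  · rw [if_pos hF, sum_eq_single_of_mem F.card (mem_range.mpr hF.1.card_lt)]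
    · rw [if_pos ⟨hF.1, rfl, hF.2⟩, neg_pow α]
    · intro j _ hj
      simp [Ne.symm hj]
  · rw [if_neg hF]
    exact sum_eq_zero fun j _ => by simp_all

end Transfer

theorem matrix_forest_resolvent_general
    {V : Type*} [Fintype V] [DecidableEq V]
    (G : SimpleGraph V)
    (k : V → V → ℝ)
    (hk0 : ∀ x y, ¬ G.Adj x y → k x y = 0)
    (L : Matrix V V ℝ)
    (hL : ∀ x y, L x y = if x = y then -(∑ z ∈ Finset.univ.erase x, k x z) else k x y)
    (α : ℝ) (x y : V) :
    (1 + α • L)⁻¹ x y =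
      (∑ j ∈ Finset.range (Fintype.card V), (-1 : ℝ) ^ j * α ^ j *
          weightSum k (fun F => IsRootedForest G F ∧ F.card = j ∧ RootedAt F x y)) /
        (∑ j ∈ Finset.range (Fintype.card V), (-1 : ℝ) ^ j * α ^ j *
          weightSum k (fun F => IsRootedForest G F ∧ F.card = j)) := by
  classical
  have : Nonempty V := ⟨x⟩
  have hweight : ∀ F, ∀ e ∈ F, ¬G.Adj e.1 e.2 → (-α) ^ F.card * forestWeight k F = 0 :=
    fun F e he hne => by rw [forestWeight, prod_eq_zero he (hk0 _ _ hne), mul_zero]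
  have hnum := (sum_range_weightSum_eq G k α (RootedAt · x y)).trans
    (sum_funGraph_eq_sum_isRootedForest _ _ hweight).symm
  have hden := (sum_range_weightSum_eq G k α fun _ => True).trans
    (sum_funGraph_eq_sum_isRootedForest _ _ hweight).symm
  simp only [and_true] at hden
  rw [hnum, hden, Matrix.inv_def, Matrix.smul_apply, smul_eq_mul, Ring.inverse_eq_inv,
    adjugate_apply, det_updateRow_one_add_smul_eq_sum hL, det_one_add_smul_eq_sum hL,
    inv_mul_eq_div]

/-- Matrix-forest theorem for the resolvent: for an irreducible Markov jump
process with rates `k` on a finite connected graph `G` with `N` vertices and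
backward generator `L`, for every `α > 0` the entries of `(I + αL)⁻¹` are
ratios of signed generating polynomials of weights of rooted spanning forests:
`((I + αL)⁻¹)_{xy} = (∑_{j<N} (-1)^j α^j w(F_j^{x→y})) / (∑_{j<N} (-1)^j α^j w(F_j))`. -/
theorem matrix_forest_resolvent
    {V : Type*} [Fintype V] [DecidableEq V]
    (G : SimpleGraph V) (hG : G.Connected)
    (k : V → V → ℝ) (hkpos : ∀ x y, G.Adj x y → 0 < k x y)
    (hk0 : ∀ x y, ¬ G.Adj x y → k x y = 0)
    (L : Matrix V V ℝ)
    (hL : ∀ x y, L x y = if x = y then -(∑ z ∈ Finset.univ.erase x, k x z) else k x y)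
    (α : ℝ) (hα : 0 < α) (x y : V) :
    (1 + α • L)⁻¹ x y =
      (∑ j ∈ Finset.range (Fintype.card V), (-1 : ℝ) ^ j * α ^ j *
          weightSum k (fun F => IsRootedForest G F ∧ F.card = j ∧ RootedAt F x y)) /
        (∑ j ∈ Finset.range (Fintype.card V), (-1 : ℝ) ^ j * α ^ j *
          weightSum k (fun F => IsRootedForest G F ∧ F.card = j)) :=
  matrix_forest_resolvent_general G k hk0 L hL α x y
end

section
/- For an irreducible Markov jump process on a finite connected graph with N vertices, the unique stationary distribution is given by the Kirchhoff/matrix-tree formula ρ(x) = w(x) / ∑_y w(y), where w(x) = ∑_{T} ∏_{(u,v)∈T} k(u,v) is the sum of weights over all spanning trees rooted at x (every edge directed toward x along the tree). -/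
open Matrix

/-- `F` is a spanning tree of `G` rooted at `x`: its directed edges are edges
of `G`, every vertex has at most one outgoing edge, there are no directed
cycles, and from every vertex there is a directed path to `x`. -/
def IsSpanningTreeRootedAt {V : Type*} [DecidableEq V] (G : SimpleGraph V)
    (F : Finset (V × V)) (x : V) : Prop :=
  (∀ e ∈ F, G.Adj e.1 e.2) ∧
  (∀ v : V, (F.filter (fun e => e.1 = v)).card ≤ 1) ∧
  (∀ a b : V, (a, b) ∈ F → ¬ Relation.ReflTransGen (forestStep F) b a) ∧
  (∀ v : V, Relation.ReflTransGen (forestStep F) v x)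

/-- `kirchhoffWeight k G x` is `w(x)`, the sum of the weights of all spanning
trees of `G` rooted at `x`. -/
noncomputable def kirchhoffWeight {V : Type*} [Fintype V] [DecidableEq V]
    (k : V → V → ℝ) (G : SimpleGraph V) (x : V) : ℝ :=
  ∑ F : Finset (V × V),
    Set.indicator {F | IsSpanningTreeRootedAt G F x} (forestWeight k) F

/-!
Write `w` for `kirchhoffWeight k G`. Re-rooting is a weight-preserving bijection between pairs
(tree rooted at `y`, edge `y → c`) and pairs (tree rooted at `c`, edge `c → z`): cut the edge
`c → z` and add `y → c`, or conversely cut the last edge `y → c` on the path from `z` and add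
`c → z`. Summing over these pairs gives the balance `∑_y w(y) k(y,c) = w(c) ∑_z k(c,z)`, i.e.
`w L = 0`. Each `w(x)` is positive, since following decreasing graph distance to `x` gives a
spanning tree rooted at `x`. Finally, if `ρ L = 0` and `m = max ρ/w`, then `u = m w - ρ ≥ 0`
vanishes somewhere and satisfies `u L = 0`; at a zero `c` of `u` the equation
`∑_{y ≠ c} u(y) L(y,c) = 0` has nonnegative terms, so `u` vanishes at the neighbours of `c`
and hence everywhere on the connected graph.
-/

open Finset Relation

section Forest

variable {V : Type*}

def OutUnique (F : Finset (V × V)) : Prop :=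
  ∀ ⦃v a b : V⦄, (v, a) ∈ F → (v, b) ∈ F → a = b

variable {F F' : Finset (V × V)} {a b c r s u v : V}

theorem OutUnique.mono (h : F ⊆ F') (hU : OutUnique F') : OutUnique F :=
  fun _ _ _ ha hb => hU (h ha) (h hb)

theorem OutUnique.insert [DecidableEq V] (hU : OutUnique F) (hu : ∀ t, (u, t) ∉ F) :
    OutUnique (insert (u, s) F) := by
  intro v a b ha hb
  rcases mem_insert.1 ha with ha' | ha' <;> rcases mem_insert.1 hb with hb' | hb'
  · exact (Prod.mk.inj ha').2.trans (Prod.mk.inj hb').2.symm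
  · obtain ⟨rfl, rfl⟩ := Prod.mk.inj ha'
    exact absurd hb' (hu b)
  · obtain ⟨rfl, rfl⟩ := Prod.mk.inj hb'
    exact absurd ha' (hu a)
  · exact hU ha' hb'

theorem outUnique_iff_card_filter_le_one [DecidableEq V] :
    OutUnique F ↔ ∀ v, (F.filter fun e => e.1 = v).card ≤ 1 := by
  simp only [card_le_one, mem_filter]
  constructor
  · rintro hU _ ⟨v, a⟩ ⟨ha, rfl⟩ ⟨w, b⟩ ⟨hb, hwv⟩
    obtain rfl : w = v := hwv
    rw [hU ha hb]
  · intro h v a b ha hb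
    exact congrArg Prod.snd (h v _ ⟨ha, rfl⟩ _ ⟨hb, rfl⟩)

namespace forestStep

theorem reflTransGen_mono (h : F ⊆ F') (hab : ReflTransGen (forestStep F) a b) :
    ReflTransGen (forestStep F') a b :=
  ReflTransGen.mono (fun _ _ he => h he) _ _ hab

theorem eq_of_reflTransGen_of_forall_notMem (ha : ∀ t, (a, t) ∉ F)
    (hab : ReflTransGen (forestStep F) a b) : b = a := by
  rcases hab.cases_head with rfl | ⟨t, ht, -⟩
  · rfl
  · exact absurd ht (ha t)

theorem reflTransGen_total (hU : OutUnique F) (hab : ReflTransGen (forestStep F) a b)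
    (hac : ReflTransGen (forestStep F) a c) :
    ReflTransGen (forestStep F) b c ∨ ReflTransGen (forestStep F) c b := by
  induction hab using ReflTransGen.head_induction_on with
  | refl => exact .inl hac
  | head has hsb ih =>
    rcases hac.cases_head with rfl | ⟨t, hat, htc⟩
    · exact .inr (.head has hsb)
    · exact ih (hU hat has ▸ htc)

theorem reflTransGen_erase [DecidableEq V] (e : V × V) (hab : ReflTransGen (forestStep F) a b) :
    ReflTransGen (forestStep (F.erase e)) a b ∨ ReflTransGen (forestStep (F.erase e)) a e.1 := by
  induction hab using ReflTransGen.head_induction_on with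
  | refl => exact .inl .refl
  | @head a t hat _ ih =>
    by_cases he : (a, t) = e
    · subst he
      exact .inr .refl
    · have hat' : forestStep (F.erase e) a t := mem_erase.2 ⟨he, hat⟩
      exact ih.imp (.head hat') (.head hat')

theorem not_reflTransGen_of_mem (hU : OutUnique F) (hr : ∀ t, (r, t) ∉ F)
    (hv : ReflTransGen (forestStep F) v r) (hvs : (v, s) ∈ F) :
    ¬ ReflTransGen (forestStep F) s v := by
  induction hv using ReflTransGen.head_induction_on generalizing s with
  | refl => exact absurd hvs (hr s)
  | head hvt _ ih =>
    obtain rfl := hU hvs hvt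
    intro hsv
    rcases hsv.cases_head with rfl | ⟨t, hst, htv⟩
    · exact ih hvt .refl
    · exact ih hst (htv.tail hvt)

end forestStep

end Forest

section Tree

variable {V : Type*} [DecidableEq V] {G : SimpleGraph V} {T : Finset (V × V)} {a b c r s v y z : V}

open forestStep

namespace IsSpanningTreeRootedAt

theorem of_outUnique (hG : ∀ e ∈ T, G.Adj e.1 e.2) (hU : OutUnique T) (hr : ∀ t, (r, t) ∉ T)
    (hreach : ∀ v, ReflTransGen (forestStep T) v r) : IsSpanningTreeRootedAt G T r :=
  ⟨hG, outUnique_iff_card_filter_le_one.1 hU,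
    fun _ _ hab => not_reflTransGen_of_mem hU hr (hreach _) hab, hreach⟩

theorem outUnique (hT : IsSpanningTreeRootedAt G T r) : OutUnique T :=
  outUnique_iff_card_filter_le_one.2 hT.2.1

theorem root_notMem (hT : IsSpanningTreeRootedAt G T r) (t : V) : (r, t) ∉ T :=
  fun hrt => hT.2.2.1 r t hrt (hT.2.2.2 t)

theorem exists_mem_of_ne_root (hT : IsSpanningTreeRootedAt G T r) (hv : v ≠ r) :
    ∃ t, (v, t) ∈ T := by
  rcases (hT.2.2.2 v).cases_head with rfl | ⟨t, ht, -⟩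
  · exact absurd rfl hv
  · exact ⟨t, ht⟩

theorem exists_child_reflTransGen (hT : IsSpanningTreeRootedAt G T r) (hv : v ≠ r) :
    ∃ y, (y, r) ∈ T ∧ ReflTransGen (forestStep T) v y := by
  rcases (hT.2.2.2 v).cases_tail with rfl | ⟨y, hvy, hyr⟩
  · exact absurd rfl hv
  · exact ⟨y, hyr, hvy⟩

/-- A path from `b` through the edge `(a, b)` would close a cycle. -/
theorem reflTransGen_erase_of_mem (hT : IsSpanningTreeRootedAt G T r) (hab : (a, b) ∈ T)
    (hbv : ReflTransGen (forestStep T) b v) :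
    ReflTransGen (forestStep (T.erase (a, b))) b v :=
  (reflTransGen_erase (a, b) hbv).resolve_right fun hba =>
    hT.2.2.1 a b hab (reflTransGen_mono (erase_subset _ _) hba)

theorem eq_of_reflTransGen_of_mem (hT : IsSpanningTreeRootedAt G T r) (ha : (a, r) ∈ T)
    (hb : (b, r) ∈ T) (hab : ReflTransGen (forestStep T) a b) : a = b := by
  rcases hab.cases_head with rfl | ⟨t, hat, htb⟩
  · rfl
  · obtain rfl := hT.outUnique hat ha
    obtain rfl := eq_of_reflTransGen_of_forall_notMem hT.root_notMem htb
    exact absurd hb (hT.root_notMem _)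

theorem reroot (hT : IsSpanningTreeRootedAt G T r) (hab : (a, b) ∈ T)
    (hsa : ReflTransGen (forestStep T) s a) (hrs : G.Adj r s) :
    IsSpanningTreeRootedAt G (insert (r, s) (T.erase (a, b))) a := by
  have hE : T.erase (a, b) ⊆ T := erase_subset _ _
  have hEI : T.erase (a, b) ⊆ insert (r, s) (T.erase (a, b)) := subset_insert _ _
  have hra : r ≠ a := by
    rintro rfl
    exact hT.root_notMem b hab
  have hsa' : ReflTransGen (forestStep (T.erase (a, b))) s a :=
    (reflTransGen_erase (a, b) hsa).elim id id
  refine of_outUnique ?_ ?_ ?_ ?_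
  · simp only [mem_insert, forall_eq_or_imp]
    exact ⟨hrs, fun e he => hT.1 e (hE he)⟩
  · exact (hT.outUnique.mono hE).insert fun t ht => hT.root_notMem t (hE ht)
  · intro t ht
    rcases mem_insert.1 ht with hrs' | hat
    · exact hra (Prod.mk.inj hrs').1.symm
    · obtain rfl := hT.outUnique (hE hat) hab
      exact notMem_erase _ _ hat
  · intro v
    rcases reflTransGen_erase (a, b) (hT.2.2.2 v) with hvr | hva
    · exact (reflTransGen_mono hEI hvr).trans
        (.head (mem_insert_self _ _) (reflTransGen_mono hEI hsa'))
    · exact reflTransGen_mono hEI hva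

end IsSpanningTreeRootedAt

end Tree

section Bijection

variable {V : Type*} [DecidableEq V] {G : SimpleGraph V} {T : Finset (V × V)} {c r v y z : V}

open forestStep

open scoped Classical in
noncomputable def forestParent (T : Finset (V × V)) (v : V) : V :=
  if h : ∃ t, (v, t) ∈ T then h.choose else v

open scoped Classical in
/-- In a tree rooted at `c`: the child of `c` whose branch contains `z`. -/
noncomputable def forestChildToward (T : Finset (V × V)) (c z : V) : V :=
  if h : ∃ y, (y, c) ∈ T ∧ ReflTransGen (forestStep T) z y then h.choose else z

namespace IsSpanningTreeRootedAt

theorem forestParent_mem (hT : IsSpanningTreeRootedAt G T r) (hv : v ≠ r) :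
    (v, forestParent T v) ∈ T := by
  have h := hT.exists_mem_of_ne_root hv
  rw [forestParent, dif_pos h]
  exact h.choose_spec

theorem forestParent_eq (hT : IsSpanningTreeRootedAt G T r) (hv : (v, y) ∈ T) :
    forestParent T v = y :=
  hT.outUnique (hT.forestParent_mem fun h => hT.root_notMem y (h ▸ hv)) hv

theorem forestChildToward_spec (hT : IsSpanningTreeRootedAt G T c) (hz : z ≠ c) :
    (forestChildToward T c z, c) ∈ T ∧
      ReflTransGen (forestStep T) z (forestChildToward T c z) := by
  have h := hT.exists_child_reflTransGen hz
  rw [forestChildToward, dif_pos h]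
  exact h.choose_spec

theorem forestChildToward_eq (hT : IsSpanningTreeRootedAt G T c) (hy : (y, c) ∈ T)
    (hzy : ReflTransGen (forestStep T) z y) : forestChildToward T c z = y := by
  have hz : z ≠ c := by
    rintro rfl
    obtain rfl := eq_of_reflTransGen_of_forall_notMem hT.root_notMem hzy
    exact hT.root_notMem _ hy
  obtain ⟨hy', hzy'⟩ := hT.forestChildToward_spec hz
  rcases reflTransGen_total hT.outUnique hzy' hzy with h | h
  · exact hT.eq_of_reflTransGen_of_mem hy' hy h
  · exact (hT.eq_of_reflTransGen_of_mem hy hy' h).symm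

end IsSpanningTreeRootedAt

theorem forestWeight_insert_erase_mul (k : V → V → ℝ) {e e' : V × V}
    (he : e ∈ T) (he' : e' ∉ T) :
    forestWeight k (insert e' (T.erase e)) * k e.1 e.2 = forestWeight k T * k e'.1 e'.2 := by
  rw [forestWeight, forestWeight, prod_insert fun h => he' (mem_of_mem_erase h), mul_assoc,
    prod_erase_mul _ _ he, mul_comm]

theorem Finset.insert_erase_insert_erase {α : Type*} [DecidableEq α] {s : Finset α} {a b : α}
    (ha : a ∈ s) (hb : b ∉ s) : insert a ((insert b (s.erase a)).erase b) = s := by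
  rw [erase_insert fun h => hb (mem_of_mem_erase h), insert_erase ha]

variable [Fintype V]

open scoped Classical in
theorem sum_inEdge_rootedTree_eq_sum_outEdge_rootedTree (k : V → V → ℝ) (c : V) :
    ∑ p ∈ univ.filter (fun p : V × Finset (V × V) =>
        G.Adj p.1 c ∧ IsSpanningTreeRootedAt G p.2 p.1), forestWeight k p.2 * k p.1 c =
      ∑ p ∈ univ.filter (fun p : V × Finset (V × V) =>
        G.Adj c p.1 ∧ IsSpanningTreeRootedAt G p.2 c), forestWeight k p.2 * k c p.1 := by
  refine sum_nbij'
    (fun p => (forestParent p.2 c, insert (p.1, c) (p.2.erase (c, forestParent p.2 c))))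
    (fun p => (forestChildToward p.2 c p.1,
      insert (c, p.1) (p.2.erase (forestChildToward p.2 c p.1, c)))) ?_ ?_ ?_ ?_ ?_ <;>
  simp only [mem_filter, mem_univ, true_and, Prod.forall]
  · rintro y T ⟨hyc, hT⟩
    have hz := hT.forestParent_mem hyc.ne'
    exact ⟨hT.1 _ hz, hT.reroot hz .refl hyc⟩
  · rintro z T ⟨hcz, hT⟩
    obtain ⟨hy, hzy⟩ := hT.forestChildToward_spec hcz.ne'
    exact ⟨hT.1 _ hy, hT.reroot hy hzy hcz⟩
  · rintro y T ⟨hyc, hT⟩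
    have hz := hT.forestParent_mem hyc.ne'
    have hzy := reflTransGen_mono (subset_insert (y, c) _)
      (hT.reflTransGen_erase_of_mem hz (hT.2.2.2 _))
    rw [(hT.reroot hz .refl hyc).forestChildToward_eq (mem_insert_self _ _) hzy,
      insert_erase_insert_erase hz (hT.root_notMem c)]
  · rintro z T ⟨hcz, hT⟩
    obtain ⟨hy, hzy⟩ := hT.forestChildToward_spec hcz.ne'
    rw [(hT.reroot hy hzy hcz).forestParent_eq (mem_insert_self _ _),
      insert_erase_insert_erase hy (hT.root_notMem z)]
  · rintro y T ⟨hyc, hT⟩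
    exact (forestWeight_insert_erase_mul k (hT.forestParent_mem hyc.ne') (hT.root_notMem c)).symm

end Bijection

section Balance

variable {V : Type*} [Fintype V] [DecidableEq V] {G : SimpleGraph V} {k : V → V → ℝ}

open scoped Classical in
theorem kirchhoffWeight_mul_eq_sum_ite {P : Prop} {x : ℝ} (hx : ¬P → x = 0) (r : V) :
    kirchhoffWeight k G r * x =
      ∑ T, if P ∧ IsSpanningTreeRootedAt G T r then forestWeight k T * x else 0 := by
  rw [kirchhoffWeight, sum_mul]
  refine sum_congr rfl fun T _ => ?_
  by_cases hP : P
  · simp [Set.indicator_apply, hP, ite_mul]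
  · simp [hP, hx hP]

theorem sum_kirchhoffWeight_mul_rate (hk0 : ∀ x y, ¬ G.Adj x y → k x y = 0) (c : V) :
    ∑ y, kirchhoffWeight k G y * k y c = kirchhoffWeight k G c * ∑ z, k c z := by
  classical
  rw [mul_sum]
  simp_rw [kirchhoffWeight_mul_eq_sum_ite (hk0 _ c), kirchhoffWeight_mul_eq_sum_ite (hk0 c _)]
  rw [← Fintype.sum_prod_type', ← Fintype.sum_prod_type', ← sum_filter, ← sum_filter]
  exact sum_inEdge_rootedTree_eq_sum_outEdge_rootedTree k c

theorem vecMul_kirchhoffWeight_eq_zero (hk0 : ∀ x y, ¬ G.Adj x y → k x y = 0) {L : Matrix V V ℝ}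
    (hL : ∀ x y, L x y = if x = y then -(∑ z ∈ univ.erase x, k x z) else k x y) :
    vecMul (kirchhoffWeight k G) L = 0 := by
  ext c
  have hL' : ∀ y, L y c = k y c - if y = c then ∑ z, k c z else 0 := by
    intro y
    rw [hL]
    split_ifs with h
    · subst h
      rw [sum_erase _ (hk0 y y (G.irrefl)), hk0 y y (G.irrefl)]
      ring
    · ring
  simp [vecMul, dotProduct, hL', mul_sub, sum_kirchhoffWeight_mul_rate hk0]

end Balance

section Positivity

variable {V : Type*} {G : SimpleGraph V} {v r : V}

theorem SimpleGraph.Connected.exists_adj_dist_lt (hG : G.Connected) (hv : v ≠ r) :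
    ∃ u, G.Adj v u ∧ G.dist u r < G.dist v r := by
  obtain ⟨p, hp⟩ := hG.exists_walk_length_eq_dist v r
  cases p with
  | nil => exact absurd rfl hv
  | @cons _ u _ hvu q =>
    refine ⟨u, hvu, ?_⟩
    have := SimpleGraph.dist_le q
    simp only [SimpleGraph.Walk.length_cons] at hp
    omega

variable [Fintype V] [DecidableEq V]

theorem exists_isSpanningTreeRootedAt (hG : G.Connected) (r : V) :
    ∃ T, IsSpanningTreeRootedAt G T r := by
  choose! p hp using fun v (hv : v ≠ r) => hG.exists_adj_dist_lt hv
  have hmem : ∀ {v a}, (v, a) ∈ (univ.erase r).image (fun v => (v, p v)) ↔ v ≠ r ∧ p v = a := by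
    simp [and_comm]
  refine ⟨(univ.erase r).image fun v => (v, p v), .of_outUnique ?_ ?_ ?_ ?_⟩
  · rintro ⟨v, a⟩ hva
    obtain ⟨hv, rfl⟩ := hmem.1 hva
    exact (hp v hv).1
  · intro v a b ha hb
    exact (hmem.1 ha).2.symm.trans (hmem.1 hb).2
  · exact fun t h => (hmem.1 h).1 rfl
  · intro v
    induction v using (measure fun v => G.dist v r).wf.induction with
    | _ v ih =>
      by_cases hv : v = r
      · exact hv ▸ .refl
      · exact .head (hmem.2 ⟨hv, rfl⟩) (ih _ (hp v hv).2)

theorem kirchhoffWeight_pos {k : V → V → ℝ} (hG : G.Connected)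
    (hkpos : ∀ x y, G.Adj x y → 0 < k x y) (r : V) : 0 < kirchhoffWeight k G r := by
  have hpos : ∀ {T}, IsSpanningTreeRootedAt G T r → 0 < forestWeight k T :=
    fun hT => prod_pos fun e he => hkpos _ _ (hT.1 e he)
  obtain ⟨T, hT⟩ := exists_isSpanningTreeRootedAt hG r
  refine sum_pos' (fun F _ => Set.indicator_nonneg (fun _ hF => (hpos hF).le) F) ⟨T, mem_univ T, ?_⟩
  rw [Set.indicator_of_mem (show T ∈ {F | IsSpanningTreeRootedAt G F r} from hT)]
  exact hpos hT

end Positivity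

section Uniqueness

variable {V : Type*} [Fintype V] {G : SimpleGraph V} {L : Matrix V V ℝ}

theorem eq_zero_of_nonneg_of_vecMul_eq_zero (hG : G.Connected)
    (hoff : ∀ y c, y ≠ c → 0 ≤ L y c) (hadj : ∀ y c, G.Adj y c → 0 < L y c)
    {u : V → ℝ} (hu : 0 ≤ u) (huL : vecMul u L = 0) {v₀ : V} (hv₀ : u v₀ = 0) : u = 0 := by
  classical
  have spread : ∀ c, u c = 0 → ∀ b, G.Adj b c → u b = 0 := by
    intro c hc b hbc
    have h := congrFun huL c
    simp only [vecMul, dotProduct, Pi.zero_apply] at h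
    rw [← sum_erase_add _ _ (mem_univ c), hc, zero_mul, add_zero,
      sum_eq_zero_iff_of_nonneg fun y hy => mul_nonneg (hu y) (hoff y c (ne_of_mem_erase hy))] at h
    exact (mul_eq_zero.1 (h b (mem_erase.2 ⟨hbc.ne, mem_univ b⟩))).resolve_right
      (hadj b c hbc).ne'
  funext v
  obtain ⟨p⟩ := hG.preconnected v v₀
  induction p with
  | nil => exact hv₀
  | cons hvw _ ih => exact spread _ (ih hv₀) _ hvw

theorem exists_eq_smul_of_vecMul_eq_zero [Nonempty V] (hG : G.Connected)
    (hoff : ∀ y c, y ≠ c → 0 ≤ L y c) (hadj : ∀ y c, G.Adj y c → 0 < L y c)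
    {w ρ : V → ℝ} (hw : ∀ v, 0 < w v) (hwL : vecMul w L = 0) (hρL : vecMul ρ L = 0) :
    ∃ m : ℝ, ρ = m • w := by
  obtain ⟨v₀, -, hv₀⟩ := exists_max_image univ (fun v => ρ v / w v) univ_nonempty
  refine ⟨ρ v₀ / w v₀, (sub_eq_zero.1 ?_).symm⟩
  refine eq_zero_of_nonneg_of_vecMul_eq_zero hG hoff hadj (v₀ := v₀) (fun v => ?_) ?_ ?_
  · simpa using (div_le_iff₀ (hw v)).1 (hv₀ v (mem_univ v))
  · rw [sub_vecMul, smul_vecMul, hwL, hρL, smul_zero, sub_zero]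
  · simp [div_mul_cancel₀ _ (hw v₀).ne']

end Uniqueness

theorem kirchhoff_stationary_distribution_general
    {V : Type*} [Fintype V] [DecidableEq V]
    (G : SimpleGraph V) (hG : G.Connected)
    (k : V → V → ℝ) (hkpos : ∀ x y, G.Adj x y → 0 < k x y)
    (hk0 : ∀ x y, ¬ G.Adj x y → k x y = 0)
    (L : Matrix V V ℝ)
    (hL : ∀ x y, L x y = if x = y then -(∑ z ∈ Finset.univ.erase x, k x z) else k x y)
    (ρ : V → ℝ) (hρsum : ∑ x, ρ x = 1)
    (hρstat : Matrix.vecMul ρ L = 0) (x : V) :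
    ρ x = kirchhoffWeight k G x / ∑ y, kirchhoffWeight k G y := by
  have : Nonempty V := ⟨x⟩
  have hoff : ∀ y c, y ≠ c → 0 ≤ L y c := fun y c hyc => by
    rw [hL, if_neg hyc]
    by_cases h : G.Adj y c
    exacts [(hkpos y c h).le, (hk0 y c h).ge]
  have hadj : ∀ y c, G.Adj y c → 0 < L y c := fun y c h => by
    rw [hL, if_neg h.ne]
    exact hkpos y c h
  have hw := kirchhoffWeight_pos hG hkpos
  obtain ⟨m, rfl⟩ := exists_eq_smul_of_vecMul_eq_zero hG hoff hadj hw
    (vecMul_kirchhoffWeight_eq_zero hk0 hL) hρstat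
  have hm : m * ∑ y, kirchhoffWeight k G y = 1 := by simpa [mul_sum] using hρsum
  rw [eq_div_iff (sum_pos (fun y _ => hw y) univ_nonempty).ne', Pi.smul_apply, smul_eq_mul]
  linear_combination kirchhoffWeight k G x * hm

/-- Kirchhoff / matrix-tree formula: for an irreducible Markov jump process on
a finite connected graph, the unique stationary distribution is
`ρ(x) = w(x) / ∑_y w(y)`, where `w(x)` is the sum over all spanning trees
rooted at `x` of the products of the rates along their edges. -/
theorem kirchhoff_stationary_distribution
    {V : Type*} [Fintype V] [DecidableEq V]
    (G : SimpleGraph V) (hG : G.Connected)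
    (k : V → V → ℝ) (hkpos : ∀ x y, G.Adj x y → 0 < k x y)
    (hk0 : ∀ x y, ¬ G.Adj x y → k x y = 0)
    (L : Matrix V V ℝ)
    (hL : ∀ x y, L x y = if x = y then -(∑ z ∈ Finset.univ.erase x, k x z) else k x y)
    (ρ : V → ℝ) (hρpos : ∀ x, 0 ≤ ρ x) (hρsum : ∑ x, ρ x = 1)
    (hρstat : Matrix.vecMul ρ L = 0) (x : V) :
    ρ x = kirchhoffWeight k G x / ∑ y, kirchhoffWeight k G y :=
  kirchhoff_stationary_distribution_general G hG k hkpos hk0 L hL ρ hρsum hρstat x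
end
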